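/- Let A be a smooth, structured-decomposable, deterministic probabilistic circuit over variables X respecting a vtree V, with augmented PC A_aug over X ∪ Z. Then for every assignment x of X with p_A(x) > 0, there is exactly one joint assignment z of the latent variables Z such that p_{A_aug}(x, z) > 0. -/

import Mathlib

open scoped BigOperators

/-! ### Probabilistic circuits

A probabilistic circuit is a rooted DAG of leaf, sum and product nodes.  We represent the
DAG by a finite sequence of nodes; well-formedness (`PC.WF`) requires that the children of
every node have strictly smaller index, and the root is the node of largest index. -/

inductive PCNode (ι : Type) (Val : ι → Type) (N : ℕ) where
  | leaf (v : ι) (f : Val v → ℝ)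
  | sum (ch : List (Fin N × ℝ))
  | prod (ch : List (Fin N))

namespace PCNode

variable {ι : Type} {Val : ι → Type} {N : ℕ}

def children : PCNode ι Val N → List (Fin N)
  | .leaf _ _ => []
  | .sum ch => ch.map Prod.fst
  | .prod ch => ch

def childCount : PCNode ι Val N → ℕ
  | .leaf _ _ => 0
  | .sum ch => ch.length
  | .prod ch => ch.length

def isProdB : PCNode ι Val N → Bool
  | .prod _ => true
  | _ => false

end PCNode

structure PC (ι : Type) (Val : ι → Type) where
  numNodes : ℕ
  node : Fin numNodes → PCNode ι Val numNodes

namespace PC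

variable {ι : Type} {Val : ι → Type}

/-- Acyclicity: every edge goes from a larger to a strictly smaller index. -/
def WF (C : PC ι Val) : Prop :=
  ∀ i : Fin C.numNodes, ∀ j ∈ (C.node i).children, (j : ℕ) < (i : ℕ)

/-- Fuelled evaluation of a node; for a well-formed circuit, fuel `C.numNodes` always
suffices. -/
def evalFuel (C : PC ι Val) (x : ∀ i, Val i) : ℕ → Fin C.numNodes → ℝ
  | 0, _ => 0
  | k+1, i =>
    match C.node i with
    | .leaf v f => f (x v)
    | .sum ch => (ch.map fun p => p.2 * evalFuel C x k p.1).sum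
    | .prod ch => (ch.map fun j => evalFuel C x k j).prod

def nodeEval (C : PC ι Val) (x : ∀ i, Val i) (i : Fin C.numNodes) : ℝ :=
  evalFuel C x C.numNodes i

/-- The function computed by the circuit (the value of its root node). -/
def eval (C : PC ι Val) (x : ∀ i, Val i) : ℝ :=
  if h : 0 < C.numNodes then nodeEval C x ⟨C.numNodes - 1, by omega⟩ else 0

def scopeFuel [DecidableEq ι] (C : PC ι Val) : ℕ → Fin C.numNodes → Finset ι
  | 0, _ => ∅
  | k+1, i =>
    match C.node i with
    | .leaf v _ => {v}
    | .sum ch => (ch.map fun p => scopeFuel C k p.1).foldr (· ∪ ·) ∅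
    | .prod ch => (ch.map fun j => scopeFuel C k j).foldr (· ∪ ·) ∅

/-- The scope of a node: the set of variables its subcircuit depends on. -/
def scope [DecidableEq ι] (C : PC ι Val) (i : Fin C.numNodes) : Finset ι :=
  scopeFuel C C.numNodes i

def rootScope [DecidableEq ι] (C : PC ι Val) : Finset ι :=
  if h : 0 < C.numNodes then scope C ⟨C.numNodes - 1, by omega⟩ else ∅

/-- The size of a circuit: its number of edges. -/
def numEdges (C : PC ι Val) : ℕ :=
  ∑ i : Fin C.numNodes, (C.node i).childCount

def depthFuel (C : PC ι Val) : ℕ → Fin C.numNodes → ℕ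
  | 0, _ => 0
  | k+1, i =>
    match C.node i with
    | .leaf _ _ => 0
    | .sum ch => (ch.map fun p => depthFuel C k p.1 + 1).foldr max 0
    | .prod ch => (ch.map fun j => depthFuel C k j + 1).foldr max 0

/-- The depth of a circuit: the length of the longest root-to-leaf path. -/
def depth (C : PC ι Val) : ℕ :=
  if h : 0 < C.numNodes then depthFuel C C.numNodes ⟨C.numNodes - 1, by omega⟩ else 0

/-- All children of any sum node have the same scope. -/
def Smooth [DecidableEq ι] (C : PC ι Val) : Prop :=
  ∀ (i : Fin C.numNodes) (ch : List (Fin C.numNodes × ℝ)), C.node i = .sum ch →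
    ∀ p ∈ ch, ∀ q ∈ ch, scope C p.1 = scope C q.1

/-- The children of any product node have pairwise disjoint scopes. -/
def Decomposable [DecidableEq ι] (C : PC ι Val) : Prop :=
  ∀ (i : Fin C.numNodes) (ch : List (Fin C.numNodes)), C.node i = .prod ch →
    ch.Pairwise fun a b => Disjoint (scope C a) (scope C b)

/-- Sum-node weights and leaf functions are nonnegative. -/
def NonnegWeights (C : PC ι Val) : Prop :=
  (∀ (i : Fin C.numNodes) (ch : List (Fin C.numNodes × ℝ)), C.node i = .sum ch →
      ∀ p ∈ ch, 0 ≤ p.2) ∧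
  (∀ (i : Fin C.numNodes) (v : ι) (f : Val v → ℝ), C.node i = .leaf v f → ∀ a, 0 ≤ f a)

/-- The weights of every sum node sum to one. -/
def NormalizedSums (C : PC ι Val) : Prop :=
  ∀ (i : Fin C.numNodes) (ch : List (Fin C.numNodes × ℝ)), C.node i = .sum ch →
    (ch.map Prod.snd).sum = 1

/-- Every leaf computes a probability distribution over its variable. -/
def NormalizedLeaves [∀ i, Fintype (Val i)] (C : PC ι Val) : Prop :=
  ∀ (i : Fin C.numNodes) (v : ι) (f : Val v → ℝ), C.node i = .leaf v f → ∑ a, f a = 1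

/-- Sum/leaf and product nodes alternate: children of sums are products and children of
products are sums or leaves. -/
def Alternating (C : PC ι Val) : Prop :=
  (∀ (i : Fin C.numNodes) (ch : List (Fin C.numNodes × ℝ)), C.node i = .sum ch →
      ∀ p ∈ ch, (C.node p.1).isProdB = true) ∧
  (∀ (i : Fin C.numNodes) (ch : List (Fin C.numNodes)), C.node i = .prod ch →
      ∀ j ∈ ch, (C.node j).isProdB = false)

/-- For every input, at most one child of each sum node evaluates to a nonzero value. -/
def Deterministic (C : PC ι Val) : Prop :=
  ∀ (x : ∀ i, Val i) (i : Fin C.numNodes) (ch : List (Fin C.numNodes × ℝ)),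
    C.node i = .sum ch → ∀ p ∈ ch, ∀ q ∈ ch,
      nodeEval C x p.1 ≠ 0 → nodeEval C x q.1 ≠ 0 → p.1 = q.1

/-- The number of product nodes with a given scope. -/
def prodCount [DecidableEq ι] (C : PC ι Val) (S : Finset ι) : ℕ :=
  (Finset.univ.filter fun i : Fin C.numNodes =>
    (C.node i).isProdB = true ∧ scope C i = S).card

/-- The index of a product node within the product nodes sharing its scope. -/
def idxOf [DecidableEq ι] (C : PC ι Val) (i : Fin C.numNodes) : ℕ :=
  (Finset.univ.filter fun j : Fin C.numNodes =>
    (j : ℕ) < (i : ℕ) ∧ (C.node j).isProdB = true ∧ scope C j = scope C i).card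

/-- Bundle of basic "probabilistic circuit over all the variables" conditions:
well-formed DAG, nonnegative normalized weights, normalized leaves, alternation of
sum/leaf and product nodes, and the root depending on all variables. -/
def IsPCOver [DecidableEq ι] [Fintype ι] [∀ i, Fintype (Val i)] (C : PC ι Val) : Prop :=
  C.WF ∧ C.NonnegWeights ∧ C.NormalizedSums ∧ C.NormalizedLeaves ∧ C.Alternating ∧
    C.rootScope = Finset.univ

end PC

/-! ### Vtrees -/

inductive Vtree (ι : Type) where
  | leaf (x : ι)
  | node (l r : Vtree ι)
deriving DecidableEq

namespace Vtree

variable {ι : Type}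

def varsFinset [DecidableEq ι] : Vtree ι → Finset ι
  | .leaf x => {x}
  | .node l r => varsFinset l ∪ varsFinset r

def leavesList : Vtree ι → List ι
  | .leaf x => [x]
  | .node l r => leavesList l ++ leavesList r

/-- A vtree over a set `S` of variables: its leaves are in bijection with `S`. -/
def ValidOver (T : Vtree ι) (S : Set ι) : Prop :=
  T.leavesList.Nodup ∧ ∀ x : ι, x ∈ T.leavesList ↔ x ∈ S

def numNodesV : Vtree ι → ℕ
  | .leaf _ => 1
  | .node l r => numNodesV l + numNodesV r + 1

def IsChildOf (c p : Vtree ι) : Prop :=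
  match p with
  | .leaf _ => False
  | .node l r => c = l ∨ c = r

inductive IsSubtreeOf : Vtree ι → Vtree ι → Prop
  | refl (t : Vtree ι) : IsSubtreeOf t t
  | left {s l r : Vtree ι} : IsSubtreeOf s l → IsSubtreeOf s (.node l r)
  | right {s l r : Vtree ι} : IsSubtreeOf s r → IsSubtreeOf s (.node l r)

def subtreesList : Vtree ι → List (Vtree ι)
  | .leaf x => [.leaf x]
  | .node l r => .node l r :: (subtreesList l ++ subtreesList r)

def isNodeB : Vtree ι → Bool
  | .leaf _ => false
  | .node _ _ => true

/-- The inner (non-leaf) nodes of a vtree. -/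
def innerFinset [DecidableEq ι] (V : Vtree ι) : Finset (Vtree ι) :=
  (V.subtreesList.filter fun t => t.isNodeB).toFinset

def depthV : Vtree ι → ℕ
  | .leaf _ => 0
  | .node l r => max (depthV l) (depthV r) + 1

/-- The nodes of a vtree occurring at a given depth. -/
def atDepth : Vtree ι → ℕ → Set (Vtree ι)
  | t, 0 => {t}
  | .leaf _, _+1 => ∅
  | .node l r, k+1 => atDepth l k ∪ atDepth r k

theorem numNodesV_lt_of_isChildOf {c p : Vtree ι} (h : c.IsChildOf p) :
    c.numNodesV < p.numNodesV := by
  cases p with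
  | leaf x => exact h.elim
  | node l r =>
    rcases h with h | h <;> subst h <;> simp only [numNodesV] <;> omega

end Vtree

/-- The tree `V_{v → Z_v}`, viewed as a graph: vertices are the subtrees of `V`
(inner subtrees play the role of the latent variables `Z_v`, leaves the role of the
variables `X`), with edges between each node and its children. -/
def vtreeGraph {ι : Type} (V : Vtree ι) : SimpleGraph (Vtree ι) where
  Adj s t := (s.IsChildOf t ∨ t.IsChildOf s) ∧ s.IsSubtreeOf V ∧ t.IsSubtreeOf V
  symm := by
    constructor
    rintro s t ⟨h, hs, ht⟩
    exact ⟨h.symm, ht, hs⟩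
  loopless := by
    constructor
    rintro s ⟨h, -, -⟩
    rcases h with h | h <;>
      exact absurd (Vtree.numNodesV_lt_of_isChildOf h) (lt_irrefl _)

namespace PC

variable {ι : Type} {Val : ι → Type}

/-- Structured decomposability with respect to a vtree: every product node has exactly
two children, whose scopes are the variables of the two children of an inner node of the
vtree. -/
def StructuredBy [DecidableEq ι] (C : PC ι Val) (V : Vtree ι) : Prop :=
  ∀ (i : Fin C.numNodes) (ch : List (Fin C.numNodes)), C.node i = .prod ch →
    ∃ (c₁ c₂ : Fin C.numNodes) (l r : Vtree ι), ch = [c₁, c₂] ∧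
      (Vtree.node l r).IsSubtreeOf V ∧
      scope C c₁ = l.varsFinset ∧ scope C c₂ = r.varsFinset

/-- Generalized structured decomposability (for products with arbitrarily many children):
every product node decomposes the variables of some vtree node into the variables of a
family of its subtrees. -/
def StructuredByGen [DecidableEq ι] (C : PC ι Val) (V : Vtree ι) : Prop :=
  ∀ (i : Fin C.numNodes) (ch : List (Fin C.numNodes)), C.node i = .prod ch →
    ∃ u : Vtree ι, u.IsSubtreeOf V ∧
      (∀ j ∈ ch, ∃ s : Vtree ι, s.IsSubtreeOf u ∧ scope C j = s.varsFinset) ∧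
      (ch.map fun j => scope C j).foldr (· ∪ ·) ∅ = u.varsFinset

/-- The hidden state size: the maximum number of product nodes sharing the scope of an
inner vtree node. -/
def hiddenStateSize [DecidableEq ι] (C : PC ι Val) (V : Vtree ι) : ℕ :=
  V.innerFinset.sup fun t => prodCount C t.varsFinset

end PC

/-! ### Contiguity and linear vtrees (for variables `Fin n`) -/

def IsIntervalFin {n : ℕ} (S : Finset (Fin n)) : Prop :=
  ∃ a b : ℕ, ∀ i : Fin n, i ∈ S ↔ (a ≤ (i : ℕ) ∧ (i : ℕ) ≤ b)

def PC.ContiguousPC {n : ℕ} {Val : Fin n → Type} (C : PC (Fin n) Val) : Prop :=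
  ∀ i : Fin C.numNodes, IsIntervalFin (PC.scope C i)

def Vtree.ContiguousV {n : ℕ} (V : Vtree (Fin n)) : Prop :=
  ∀ t : Vtree (Fin n), t.IsSubtreeOf V → IsIntervalFin t.varsFinset

inductive Vtree.IsLinearFrom {n : ℕ} : ℕ → Vtree (Fin n) → Prop
  | single (a : ℕ) (ha : a < n) (h : a + 1 = n) : IsLinearFrom a (.leaf ⟨a, ha⟩)
  | cons (a : ℕ) (ha : a < n) (T : Vtree (Fin n)) (h : a + 1 < n) :
      IsLinearFrom (a+1) T → IsLinearFrom a (.node (.leaf ⟨a, ha⟩) T)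

/-- The (right-)linear vtree, splitting `{Xᵢ}` from `{Xᵢ₊₁, …, Xₙ}` at each level. -/
def Vtree.IsLinear {n : ℕ} (V : Vtree (Fin n)) : Prop := Vtree.IsLinearFrom 0 V

/-! ### Blocking, covers and vtree labellings -/

/-- `C` blocks all paths between `A` and `B` in the graph `G`. -/
def SimpleGraph.BlocksSets {α : Type} (G : SimpleGraph α) (C A B : Set α) : Prop :=
  ∀ ⦃a b : α⦄, a ∈ A → b ∈ B → ∀ p : G.Walk a b, ∃ c ∈ C, c ∈ p.support

/-- A valid labelling of a target vtree `W` with respect to a (tree-shaped) graph `G`,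
where the variable `i` is represented by the vertex `xv i` and `X` is the set of all
variables.  The root is labelled `∅`, each leaf is labelled by the parent (i.e. the
neighbours) of its variable, the label of every inner node covers its variables, and the
labels of the children block their variables from the other labels. -/
structure IsValidLabelling {α ι : Type} [DecidableEq ι] (G : SimpleGraph α) (xv : ι → α)
    (X : Set ι) (W : Vtree ι) (label : Vtree ι → Set α) : Prop where
  root_empty : label W = ∅
  leaf_parent : ∀ x : ι, (Vtree.leaf x).IsSubtreeOf W →
    label (.leaf x) = {p | G.Adj (xv x) p}
  covers : ∀ l r : Vtree ι, (Vtree.node l r).IsSubtreeOf W →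
    G.BlocksSets (label (.node l r))
      (xv '' ((Vtree.node l r).varsFinset : Set ι))
      (xv '' (X \ ((Vtree.node l r).varsFinset : Set ι)))
  blocks_left : ∀ l r : Vtree ι, (Vtree.node l r).IsSubtreeOf W →
    G.BlocksSets (label l) (xv '' (l.varsFinset : Set ι)) (label r ∪ label (.node l r))
  blocks_right : ∀ l r : Vtree ι, (Vtree.node l r).IsSubtreeOf W →
    G.BlocksSets (label r) (xv '' (r.varsFinset : Set ι)) (label l ∪ label (.node l r))

/-! ### The augmented circuit -/

/-- Value types for the augmented circuit: the original variables keep their values, and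
each latent variable `Z_v` (indexed by the vtree node `v`) takes natural number values. -/
@[reducible] def augVal {ι : Type} (Val : ι → Type) : ι ⊕ Vtree ι → Type
  | .inl i => Val i
  | .inr _ => ℕ

/-- Find the subtree of a vtree with the given variable set (if any). -/
def Vtree.findByVars {ι : Type} [DecidableEq ι] : Vtree ι → Finset ι → Option (Vtree ι)
  | .leaf x, S => if S = {x} then some (.leaf x) else none
  | .node l r, S =>
      if S = (Vtree.node l r).varsFinset then some (.node l r)
      else (findByVars l S).orElse fun _ => findByVars r S

/-- The augmented circuit `A_aug` of a structured circuit: each product node `t` with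
scope `X_v` gets an additional leaf child over the latent variable `Z_v`, computing the
indicator function `1[Z_v = idx(t)]`.  (Node `2*i+1` is a copy of node `i` of the original
circuit and node `2*i` is the extra indicator leaf attached to it when `i` is a product.) -/
def PC.augment {ι : Type} {Val : ι → Type} [DecidableEq ι] (C : PC ι Val) (V : Vtree ι) :
    PC (ι ⊕ Vtree ι) (augVal Val) where
  numNodes := 2 * C.numNodes
  node := fun k =>
    if hk : (k : ℕ) % 2 = 1 then
      match C.node ⟨(k : ℕ) / 2, by have := k.isLt; omega⟩ with
      | .leaf v f => .leaf (Sum.inl v) f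
      | .sum ch => .sum (ch.map fun p =>
          ((⟨2 * (p.1 : ℕ) + 1, by have := p.1.isLt; omega⟩ : Fin (2 * C.numNodes)), p.2))
      | .prod ch => .prod ((ch.map fun (j : Fin C.numNodes) =>
          (⟨2 * (j : ℕ) + 1, by have := j.isLt; omega⟩ : Fin (2 * C.numNodes))) ++
          [⟨2 * ((k : ℕ) / 2), by have := k.isLt; omega⟩])
    else
      match C.node ⟨(k : ℕ) / 2, by have := k.isLt; omega⟩ with
      | .prod _ => .leaf
          (Sum.inr ((V.findByVars (PC.scope C ⟨(k : ℕ) / 2, by have := k.isLt; omega⟩)).getD V))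
          (fun m => if m = PC.idxOf C ⟨(k : ℕ) / 2, by have := k.isLt; omega⟩ then 1 else 0)
      | _ => .leaf (Sum.inr V) (fun _ => 1)

/-- Combine an assignment of the observed variables with an assignment of the latent
variables into an assignment for the augmented circuit. -/
def augAssign {ι : Type} {Val : ι → Type} [DecidableEq ι] (V : Vtree ι) (x : ∀ i, Val i)
    (z : ∀ t ∈ V.innerFinset, ℕ) : ∀ s : ι ⊕ Vtree ι, augVal Val s :=
  fun s => match s with
  | .inl i => x i
  | .inr t => if ht : t ∈ V.innerFinset then z t ht else 0

/-- The vtree of the augmented circuit: a new leaf for `Z_v` is attached at each inner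
node `v`. -/
def Vtree.augTree {ι : Type} : Vtree ι → Vtree (ι ⊕ Vtree ι)
  | .leaf x => .leaf (.inl x)
  | .node l r => .node (.leaf (.inr (.node l r))) (.node (augTree l) (augTree r))

/-! ### Auxiliary infrastructure for the proof -/

namespace PCProof

open PC

variable {ι : Type} {Val : ι → Type}

theorem evalFuel_eq_aux {C : PC ι Val} (hWF : C.WF) (x : ∀ i, Val i) :
    ∀ (m : ℕ) (i : Fin C.numNodes), i.val < m → ∀ k₁ k₂, i.val < k₁ → i.val < k₂ →
      C.evalFuel x k₁ i = C.evalFuel x k₂ i := by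
  intro m
  induction m with
  | zero => intro i h; omega
  | succ m ih =>
    intro i hi k₁ k₂ h₁ h₂
    obtain ⟨a, rfl⟩ : ∃ a, k₁ = a + 1 := ⟨k₁ - 1, by omega⟩
    obtain ⟨b, rfl⟩ : ∃ b, k₂ = b + 1 := ⟨k₂ - 1, by omega⟩
    have hch : ∀ j ∈ (C.node i).children, (j : ℕ) < (i : ℕ) := hWF i
    cases hnode : C.node i with
    | leaf v f => simp only [PC.evalFuel, hnode]
    | sum ch =>
      simp only [PC.evalFuel, hnode]
      congr 1
      refine List.map_congr_left fun p hp => ?_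
      have hlt : (p.1 : ℕ) < (i : ℕ) := by
        apply hch; rw [hnode]
        exact List.mem_map.2 ⟨p, hp, rfl⟩
      rw [ih p.1 (by omega) a b (by omega) (by omega)]
    | prod ch =>
      simp only [PC.evalFuel, hnode]
      congr 1
      refine List.map_congr_left fun j hj => ?_
      have hlt : (j : ℕ) < (i : ℕ) := by apply hch; rw [hnode]; exact hj
      rw [ih j (by omega) a b (by omega) (by omega)]

theorem evalFuel_eq_nodeEval {C : PC ι Val} (hWF : C.WF) (x : ∀ i, Val i)
    (i : Fin C.numNodes) (k : ℕ) (hk : i.val < k) :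
    C.evalFuel x k i = C.nodeEval x i :=
  evalFuel_eq_aux hWF x (i.val + 1) i (by omega) k C.numNodes hk i.isLt

theorem nodeEval_leaf {C : PC ι Val} (hWF : C.WF) (x : ∀ i, Val i) {i : Fin C.numNodes}
    {v : ι} {f : Val v → ℝ} (hnode : C.node i = .leaf v f) :
    C.nodeEval x i = f (x v) := by
  rw [PC.nodeEval,
    evalFuel_eq_aux hWF x (i.val + 1) i (by omega) C.numNodes (i.val + 1) i.isLt (by omega)]
  simp only [PC.evalFuel, hnode]

theorem nodeEval_sum {C : PC ι Val} (hWF : C.WF) (x : ∀ i, Val i) {i : Fin C.numNodes}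
    {ch : List (Fin C.numNodes × ℝ)} (hnode : C.node i = .sum ch) :
    C.nodeEval x i = (ch.map fun p => p.2 * C.nodeEval x p.1).sum := by
  rw [PC.nodeEval,
    evalFuel_eq_aux hWF x (i.val + 1) i (by omega) C.numNodes (i.val + 1) i.isLt (by omega)]
  simp only [PC.evalFuel, hnode]
  congr 1
  refine List.map_congr_left fun p hp => ?_
  have hlt : (p.1 : ℕ) < (i : ℕ) := by
    apply hWF i; rw [hnode]; exact List.mem_map.2 ⟨p, hp, rfl⟩
  rw [evalFuel_eq_nodeEval hWF x p.1 i.val hlt]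

theorem nodeEval_prod {C : PC ι Val} (hWF : C.WF) (x : ∀ i, Val i) {i : Fin C.numNodes}
    {ch : List (Fin C.numNodes)} (hnode : C.node i = .prod ch) :
    C.nodeEval x i = (ch.map fun j => C.nodeEval x j).prod := by
  rw [PC.nodeEval,
    evalFuel_eq_aux hWF x (i.val + 1) i (by omega) C.numNodes (i.val + 1) i.isLt (by omega)]
  simp only [PC.evalFuel, hnode]
  congr 1
  refine List.map_congr_left fun j hj => ?_
  have hlt : (j : ℕ) < (i : ℕ) := by
    apply hWF i; rw [hnode]; exact hj
  rw [evalFuel_eq_nodeEval hWF x j i.val hlt]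

theorem nodeEval_nonneg {C : PC ι Val} (hWF : C.WF) (hw : C.NonnegWeights)
    (x : ∀ i, Val i) : ∀ (m : ℕ) (i : Fin C.numNodes), i.val < m → 0 ≤ C.nodeEval x i := by
  intro m
  induction m with
  | zero => intro i h; omega
  | succ m ih =>
    intro i hi
    cases hnode : C.node i with
    | leaf v f =>
      rw [nodeEval_leaf hWF x hnode]
      exact hw.2 i v f hnode (x v)
    | sum ch =>
      rw [nodeEval_sum hWF x hnode]
      refine List.sum_nonneg fun a ha => ?_
      obtain ⟨p, hp, rfl⟩ := List.mem_map.1 ha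
      have hlt : (p.1 : ℕ) < (i : ℕ) := by
        apply hWF i; rw [hnode]; exact List.mem_map.2 ⟨p, hp, rfl⟩
      exact mul_nonneg (hw.1 i ch hnode p hp) (ih p.1 (by omega))
    | prod ch =>
      rw [nodeEval_prod hWF x hnode]
      refine List.prod_nonneg fun a ha => ?_
      obtain ⟨j, hj, rfl⟩ := List.mem_map.1 ha
      have hlt : (j : ℕ) < (i : ℕ) := by
        apply hWF i; rw [hnode]; exact hj
      exact ih j (by omega)

theorem nodeEval_nonneg' {C : PC ι Val} (hWF : C.WF) (hw : C.NonnegWeights)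
    (x : ∀ i, Val i) (i : Fin C.numNodes) : 0 ≤ C.nodeEval x i :=
  nodeEval_nonneg hWF hw x (i.val + 1) i (by omega)

end PCProof
namespace PCProof

open PC

variable {ι : Type} {Val : ι → Type}

theorem scopeFuel_eq_aux [DecidableEq ι] {C : PC ι Val} (hWF : C.WF) :
    ∀ (m : ℕ) (i : Fin C.numNodes), i.val < m → ∀ k₁ k₂, i.val < k₁ → i.val < k₂ →
      C.scopeFuel k₁ i = C.scopeFuel k₂ i := by
  intro m
  induction m with
  | zero => intro i h; omega
  | succ m ih =>
    intro i hi k₁ k₂ h₁ h₂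
    obtain ⟨a, rfl⟩ : ∃ a, k₁ = a + 1 := ⟨k₁ - 1, by omega⟩
    obtain ⟨b, rfl⟩ : ∃ b, k₂ = b + 1 := ⟨k₂ - 1, by omega⟩
    cases hnode : C.node i with
    | leaf v f => simp only [PC.scopeFuel, hnode]
    | sum ch =>
      simp only [PC.scopeFuel, hnode]
      congr 1
      refine List.map_congr_left fun p hp => ?_
      have hlt : (p.1 : ℕ) < (i : ℕ) := by
        apply hWF i; rw [hnode]; exact List.mem_map.2 ⟨p, hp, rfl⟩
      rw [ih p.1 (by omega) a b (by omega) (by omega)]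
    | prod ch =>
      simp only [PC.scopeFuel, hnode]
      congr 1
      refine List.map_congr_left fun j hj => ?_
      have hlt : (j : ℕ) < (i : ℕ) := by apply hWF i; rw [hnode]; exact hj
      rw [ih j (by omega) a b (by omega) (by omega)]

theorem scope_leaf [DecidableEq ι] {C : PC ι Val} (hWF : C.WF) {i : Fin C.numNodes}
    {v : ι} {f : Val v → ℝ} (hnode : C.node i = .leaf v f) :
    C.scope i = {v} := by
  rw [PC.scope,
    scopeFuel_eq_aux hWF (i.val + 1) i (by omega) C.numNodes (i.val + 1) i.isLt (by omega)]
  simp only [PC.scopeFuel, hnode]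

theorem scope_sum_eq [DecidableEq ι] {C : PC ι Val} (hWF : C.WF) {i : Fin C.numNodes}
    {ch : List (Fin C.numNodes × ℝ)} (hnode : C.node i = .sum ch) :
    C.scope i = (ch.map fun p => C.scope p.1).foldr (· ∪ ·) ∅ := by
  rw [PC.scope,
    scopeFuel_eq_aux hWF (i.val + 1) i (by omega) C.numNodes (i.val + 1) i.isLt (by omega)]
  simp only [PC.scopeFuel, hnode]
  congr 1
  refine List.map_congr_left fun p hp => ?_
  have hlt : (p.1 : ℕ) < (i : ℕ) := by
    apply hWF i; rw [hnode]; exact List.mem_map.2 ⟨p, hp, rfl⟩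
  rw [PC.scope, scopeFuel_eq_aux hWF (i.val + 1) p.1 (by omega) i.val C.numNodes
    (by omega) p.1.isLt]

theorem scope_prod_eq [DecidableEq ι] {C : PC ι Val} (hWF : C.WF) {i : Fin C.numNodes}
    {ch : List (Fin C.numNodes)} (hnode : C.node i = .prod ch) :
    C.scope i = (ch.map fun j => C.scope j).foldr (· ∪ ·) ∅ := by
  rw [PC.scope,
    scopeFuel_eq_aux hWF (i.val + 1) i (by omega) C.numNodes (i.val + 1) i.isLt (by omega)]
  simp only [PC.scopeFuel, hnode]
  congr 1
  refine List.map_congr_left fun j hj => ?_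
  have hlt : (j : ℕ) < (i : ℕ) := by apply hWF i; rw [hnode]; exact hj
  rw [PC.scope, scopeFuel_eq_aux hWF (i.val + 1) j (by omega) i.val C.numNodes
    (by omega) j.isLt]

theorem foldr_union_const [DecidableEq ι] (L : List (Finset ι)) (s : Finset ι)
    (h : ∀ a ∈ L, a = s) (hne : L ≠ []) : L.foldr (· ∪ ·) ∅ = s := by
  induction L with
  | nil => exact absurd rfl hne
  | cons a L ih =>
    rcases List.eq_nil_or_concat L with h0 | _
    · subst h0
      simp [h a (by simp)]
    · cases L with
      | nil => simp [h a (by simp)]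
      | cons b L' =>
        rw [List.foldr_cons, ih (fun q hq => h q (List.mem_cons_of_mem a hq)) (by simp),
          h a (by simp)]
        simp

theorem scope_sum_child [DecidableEq ι] {C : PC ι Val} (hWF : C.WF) (hsm : C.Smooth)
    {i : Fin C.numNodes} {ch : List (Fin C.numNodes × ℝ)} (hnode : C.node i = .sum ch)
    {p : Fin C.numNodes × ℝ} (hp : p ∈ ch) : C.scope i = C.scope p.1 := by
  rw [scope_sum_eq hWF hnode]
  refine foldr_union_const _ _ ?_ (by simp; rintro rfl; simp at hp)
  intro a ha
  obtain ⟨q, hq, rfl⟩ := List.mem_map.1 ha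
  exact hsm i ch hnode q hq p hp

theorem scope_prod_pair [DecidableEq ι] {C : PC ι Val} (hWF : C.WF) {i : Fin C.numNodes}
    {c₁ c₂ : Fin C.numNodes} (hnode : C.node i = .prod [c₁, c₂]) :
    C.scope i = C.scope c₁ ∪ C.scope c₂ := by
  rw [scope_prod_eq hWF hnode]
  simp

/-! #### Vtree lemmas -/

theorem vars_eq_toFinset {ι : Type} [DecidableEq ι] (T : Vtree ι) :
    T.varsFinset = T.leavesList.toFinset := by
  induction T with
  | leaf x => simp [Vtree.varsFinset, Vtree.leavesList]
  | node l r ihl ihr => simp [Vtree.varsFinset, Vtree.leavesList, ihl, ihr]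

theorem vars_nonempty {ι : Type} [DecidableEq ι] (T : Vtree ι) : T.varsFinset.Nonempty := by
  induction T with
  | leaf x => exact ⟨x, by simp [Vtree.varsFinset]⟩
  | node l r ihl ihr => exact ihl.mono (by simp [Vtree.varsFinset, Finset.subset_union_left])

theorem mem_subtreesList_iff {ι : Type} {s T : Vtree ι} :
    s ∈ T.subtreesList ↔ s.IsSubtreeOf T := by
  induction T with
  | leaf x =>
    simp only [Vtree.subtreesList, List.mem_singleton]
    constructor
    · rintro rfl; exact .refl _
    · intro h; cases h; rfl
  | node l r ihl ihr =>
    simp only [Vtree.subtreesList, List.mem_cons, List.mem_append, ihl, ihr]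
    constructor
    · rintro (rfl | h | h)
      · exact .refl _
      · exact .left h
      · exact .right h
    · intro h
      cases h with
      | refl => exact Or.inl rfl
      | left h => exact Or.inr (Or.inl h)
      | right h => exact Or.inr (Or.inr h)

theorem subtree_trans {ι : Type} {a b c : Vtree ι} (hab : a.IsSubtreeOf b)
    (hbc : b.IsSubtreeOf c) : a.IsSubtreeOf c := by
  induction hbc with
  | refl => exact hab
  | left h ih => exact .left ih
  | right h ih => exact .right ih

theorem subtree_vars_subset {ι : Type} [DecidableEq ι] {s T : Vtree ι}
    (h : s.IsSubtreeOf T) : s.varsFinset ⊆ T.varsFinset := by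
  induction h with
  | refl => exact subset_rfl
  | left h ih => exact ih.trans (by simp [Vtree.varsFinset, Finset.subset_union_left])
  | right h ih => exact ih.trans (by simp [Vtree.varsFinset, Finset.subset_union_right])

theorem subtree_nodup {ι : Type} {s T : Vtree ι} (h : s.IsSubtreeOf T)
    (hNd : T.leavesList.Nodup) : s.leavesList.Nodup := by
  induction h with
  | refl => exact hNd
  | left h ih => exact ih (List.Nodup.of_append_left (by simpa [Vtree.leavesList] using hNd))
  | right h ih => exact ih (List.Nodup.of_append_right (by simpa [Vtree.leavesList] using hNd))

theorem node_vars_disjoint {ι : Type} [DecidableEq ι] {l r : Vtree ι}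
    (hNd : (Vtree.node l r).leavesList.Nodup) :
    Disjoint l.varsFinset r.varsFinset := by
  have := List.disjoint_of_nodup_append (by simpa [Vtree.leavesList] using hNd)
  rw [vars_eq_toFinset, vars_eq_toFinset]
  rw [Finset.disjoint_left]
  intro a hal har
  exact this (by simpa using hal) (by simpa using har)

theorem not_subtree_both {ι : Type} [DecidableEq ι] {s l r : Vtree ι}
    (hNd : (Vtree.node l r).leavesList.Nodup)
    (hl : s.IsSubtreeOf l) (hr : s.IsSubtreeOf r) : False := by
  have hd := node_vars_disjoint hNd
  obtain ⟨a, ha⟩ := vars_nonempty s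
  exact Finset.disjoint_left.1 hd (subtree_vars_subset hl ha) (subtree_vars_subset hr ha)

theorem subtree_node_cases {ι : Type} {s l r : Vtree ι}
    (h : s.IsSubtreeOf (Vtree.node l r)) :
    s = Vtree.node l r ∨ s.IsSubtreeOf l ∨ s.IsSubtreeOf r := by
  cases h with
  | refl => exact Or.inl rfl
  | left h => exact Or.inr (Or.inl h)
  | right h => exact Or.inr (Or.inr h)

theorem subtree_vars_ssubset {ι : Type} [DecidableEq ι] {l r : Vtree ι} {s : Vtree ι}
    (hNd : (Vtree.node l r).leavesList.Nodup) (hs : s.IsSubtreeOf l) :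
    ¬ (Vtree.node l r).varsFinset ⊆ s.varsFinset := by
  intro hsub
  obtain ⟨a, ha⟩ := vars_nonempty r
  have har : a ∈ s.varsFinset := hsub (by simp [Vtree.varsFinset, ha])
  have hal : a ∈ l.varsFinset := subtree_vars_subset hs har
  exact Finset.disjoint_left.1 (node_vars_disjoint hNd) hal ha

theorem subtree_vars_ssubset' {ι : Type} [DecidableEq ι] {l r : Vtree ι} {s : Vtree ι}
    (hNd : (Vtree.node l r).leavesList.Nodup) (hs : s.IsSubtreeOf r) :
    ¬ (Vtree.node l r).varsFinset ⊆ s.varsFinset := by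
  intro hsub
  obtain ⟨a, ha⟩ := vars_nonempty l
  have har : a ∈ s.varsFinset := hsub (by simp [Vtree.varsFinset, ha])
  have hal : a ∈ r.varsFinset := subtree_vars_subset hs har
  exact Finset.disjoint_left.1 (node_vars_disjoint hNd) ha hal

theorem cross_vars_ne {ι : Type} [DecidableEq ι] {l r : Vtree ι} {s t : Vtree ι}
    (hNd : (Vtree.node l r).leavesList.Nodup) (hs : s.IsSubtreeOf l)
    (ht : t.IsSubtreeOf r) (hv : s.varsFinset = t.varsFinset) : False := by
  obtain ⟨a, ha⟩ := vars_nonempty s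
  exact Finset.disjoint_left.1 (node_vars_disjoint hNd)
    (subtree_vars_subset hs ha) (subtree_vars_subset ht (hv ▸ ha))

theorem vars_injective {ι : Type} [DecidableEq ι] {V : Vtree ι}
    (hNd : V.leavesList.Nodup) :
    ∀ {s t : Vtree ι}, s.IsSubtreeOf V → t.IsSubtreeOf V →
      s.varsFinset = t.varsFinset → s = t := by
  induction V with
  | leaf x =>
    intro s t hs ht _
    cases hs; cases ht; rfl
  | node l r ihl ihr =>
    have hNl : l.leavesList.Nodup :=
      List.Nodup.of_append_left (by simpa [Vtree.leavesList] using hNd)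
    have hNr : r.leavesList.Nodup :=
      List.Nodup.of_append_right (by simpa [Vtree.leavesList] using hNd)
    intro s t hs ht hv
    rcases subtree_node_cases hs with rfl | hs' | hs' <;>
      rcases subtree_node_cases ht with rfl | ht' | ht'
    · rfl
    · exact absurd (hv ▸ subset_rfl) (subtree_vars_ssubset hNd ht')
    · exact absurd (hv ▸ subset_rfl) (subtree_vars_ssubset' hNd ht')
    · exact absurd (hv ▸ subset_rfl) (subtree_vars_ssubset hNd hs')
    · exact ihl hNl hs' ht' hv
    · exact absurd hv (fun hv => cross_vars_ne hNd hs' ht' hv)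
    · exact absurd (hv ▸ subset_rfl) (subtree_vars_ssubset' hNd hs')
    · exact absurd hv.symm (fun hv => cross_vars_ne hNd ht' hs' hv)
    · exact ihr hNr hs' ht' hv

end PCProof
namespace PCProof

open PC

variable {ι : Type} {Val : ι → Type}

theorem findByVars_spec {ι : Type} [DecidableEq ι] :
    ∀ (V : Vtree ι) (S : Finset ι) (u : Vtree ι), V.findByVars S = some u →
      u.IsSubtreeOf V ∧ u.varsFinset = S := by
  intro V
  induction V with
  | leaf x =>
    intro S u h
    simp only [Vtree.findByVars] at h
    split at h
    next hS =>
      injection h with h'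
      subst h'
      exact ⟨.refl _, by rw [hS]; rfl⟩
    next => cases h
  | node l r ihl ihr =>
    intro S u h
    simp only [Vtree.findByVars] at h
    split at h
    next hS =>
      injection h with h'
      subst h'
      exact ⟨.refl _, hS.symm⟩
    next =>
      rcases hl : l.findByVars S with _ | w
      · rw [hl] at h
        simp only [Option.orElse] at h
        obtain ⟨h1, h2⟩ := ihr S u h
        exact ⟨.right h1, h2⟩
      · rw [hl] at h
        simp only [Option.orElse] at h
        injection h with h'
        obtain ⟨h1, h2⟩ := ihl S w hl
        exact ⟨.left (h' ▸ h1), h' ▸ h2⟩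

theorem findByVars_subtree {ι : Type} [DecidableEq ι] {V : Vtree ι}
    (hNd : V.leavesList.Nodup) :
    ∀ {t : Vtree ι}, t.IsSubtreeOf V → V.findByVars t.varsFinset = some t := by
  induction V with
  | leaf x =>
    intro t ht
    cases ht
    simp [Vtree.findByVars, Vtree.varsFinset]
  | node l r ihl ihr =>
    have hNl : l.leavesList.Nodup :=
      List.Nodup.of_append_left (by simpa [Vtree.leavesList] using hNd)
    have hNr : r.leavesList.Nodup :=
      List.Nodup.of_append_right (by simpa [Vtree.leavesList] using hNd)
    intro t ht
    rcases subtree_node_cases ht with rfl | hs | hs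
    · simp [Vtree.findByVars]
    · rw [Vtree.findByVars, if_neg, ihl hNl hs]
      · rfl
      · intro hv
        exact subtree_vars_ssubset hNd hs (hv ▸ subset_rfl)
    · rw [Vtree.findByVars, if_neg]
      · rcases hl : l.findByVars t.varsFinset with _ | w
        · simp only [Option.orElse]
          exact ihr hNr hs
        · obtain ⟨h1, h2⟩ := findByVars_spec l t.varsFinset w hl
          exact absurd h2 (fun hv => cross_vars_ne hNd h1 hs hv)
      · intro hv
        exact subtree_vars_ssubset' hNd hs (hv ▸ subset_rfl)

theorem mem_innerFinset_iff {ι : Type} [DecidableEq ι] {V t : Vtree ι} :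
    t ∈ V.innerFinset ↔ t.IsSubtreeOf V ∧ t.isNodeB = true := by
  simp [Vtree.innerFinset, List.mem_filter, mem_subtreesList_iff]

theorem node_mem_innerFinset {ι : Type} [DecidableEq ι] {V l r : Vtree ι}
    (h : (Vtree.node l r).IsSubtreeOf V) : Vtree.node l r ∈ V.innerFinset :=
  mem_innerFinset_iff.2 ⟨h, rfl⟩

theorem inner_not_leaf_vars {ι : Type} [DecidableEq ι] {V : Vtree ι}
    (hNd : V.leavesList.Nodup) {l r : Vtree ι} (h : (Vtree.node l r).IsSubtreeOf V)
    (v : ι) : (Vtree.node l r).varsFinset ≠ {v} := by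
  intro hv
  have hd := node_vars_disjoint (subtree_nodup h hNd)
  obtain ⟨a, ha⟩ := vars_nonempty l
  obtain ⟨b, hb⟩ := vars_nonempty r
  have hab : a ≠ b := fun hab => Finset.disjoint_left.1 hd ha (hab ▸ hb)
  have ha' : a ∈ (Vtree.node l r).varsFinset := by simp [Vtree.varsFinset, ha]
  have hb' : b ∈ (Vtree.node l r).varsFinset := by simp [Vtree.varsFinset, hb]
  rw [hv] at ha' hb'
  simp at ha' hb'
  exact hab (ha'.trans hb'.symm)

theorem idxOf_lt_prodCount [DecidableEq ι] {C : PC ι Val} {i : Fin C.numNodes}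
    (hprod : (C.node i).isProdB = true) :
    C.idxOf i < C.prodCount (C.scope i) := by
  rw [PC.idxOf, PC.prodCount]
  apply Finset.card_lt_card
  rw [Finset.ssubset_iff_of_subset]
  · exact ⟨i, by simp [hprod], by simp⟩
  · intro j hj
    simp only [Finset.mem_filter, Finset.mem_univ, true_and] at hj ⊢
    exact hj.2

end PCProof
namespace PCProof
open PC
variable {ι : Type} {Val : ι → Type}

theorem augment_node_odd [DecidableEq ι] (C : PC ι Val) (V : Vtree ι)
    (i : Fin C.numNodes) (h : 2 * i.val + 1 < 2 * C.numNodes) :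
    (C.augment V).node ⟨2 * i.val + 1, h⟩ =
      match C.node i with
      | .leaf v f => .leaf (Sum.inl v) f
      | .sum ch => .sum (ch.map fun p =>
          ((⟨2 * (p.1 : ℕ) + 1, by have := p.1.isLt; omega⟩ : Fin (2 * C.numNodes)), p.2))
      | .prod ch => .prod ((ch.map fun (j : Fin C.numNodes) =>
          (⟨2 * (j : ℕ) + 1, by have := j.isLt; omega⟩ : Fin (2 * C.numNodes))) ++
          [⟨2 * i.val, by omega⟩]) := by
  have hdiv : (2 * i.val + 1) / 2 = i.val := by omega
  simp only [PC.augment, Fin.val_mk]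
  rw [dif_pos (by omega)]
  simp only [hdiv, Fin.eta]

theorem augment_node_even [DecidableEq ι] (C : PC ι Val) (V : Vtree ι)
    (i : Fin C.numNodes) (h : 2 * i.val < 2 * C.numNodes) :
    (C.augment V).node ⟨2 * i.val, h⟩ =
      match C.node i with
      | .prod _ => .leaf (Sum.inr ((V.findByVars (C.scope i)).getD V))
          (fun m => if m = C.idxOf i then 1 else 0)
      | _ => .leaf (Sum.inr V) (fun _ => 1) := by
  have hdiv : (2 * i.val) / 2 = i.val := by omega
  simp only [PC.augment, Fin.val_mk]
  rw [dif_neg (by omega)]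
  simp only [hdiv, Fin.eta]
  have hidx : (⟨2 * i.val / 2, by omega⟩ : Fin C.numNodes) = i :=
    Fin.ext (by simp only [Fin.val_mk]; omega)
  rw [hidx]

theorem augment_WF [DecidableEq ι] {C : PC ι Val} (V : Vtree ι) (hWF : C.WF) :
    (C.augment V).WF := by
  intro k j hj
  have hknum : (k : ℕ) < 2 * C.numNodes := k.isLt
  by_cases hk : (k : ℕ) % 2 = 1
  · set m : Fin C.numNodes := ⟨(k : ℕ) / 2, by omega⟩ with hm
    have hkk : k = ⟨2 * m.val + 1, by simp only [hm, Fin.val_mk]; omega⟩ :=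
      Fin.ext (by simp only [hm, Fin.val_mk]; omega)
    rw [hkk] at hj
    erw [augment_node_odd C V m] at hj
    have hmv : m.val = (k : ℕ) / 2 := rfl
    rcases hnode : C.node m with _ | ch | ch <;> rw [hnode] at hj <;>
        simp only [PCNode.children] at hj
    · cases hj
    · rw [List.map_map] at hj
      obtain ⟨p, hp, hpe⟩ := List.mem_map.1 hj
      have h2 := hWF m p.1 (by rw [hnode]; exact List.mem_map.2 ⟨p, hp, rfl⟩)
      have : (j : ℕ) = 2 * (p.1 : ℕ) + 1 := by subst hpe; rfl
      simp only [Fin.val_mk, hmv] at *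
      omega
    · replace hj := List.mem_append.1 hj
      rcases hj with hj | hj
      · obtain ⟨p, hp, hpe⟩ := List.mem_map.1 hj
        have h2 := hWF m p (by rw [hnode]; exact hp)
        have : (j : ℕ) = 2 * (p : ℕ) + 1 := by subst hpe; rfl
        simp only [Fin.val_mk, hmv] at *
        omega
      · replace hj := List.mem_singleton.1 hj
        have : (j : ℕ) = 2 * m.val := by subst hj; rfl
        simp only [Fin.val_mk, hmv] at *
        omega
  · set m : Fin C.numNodes := ⟨(k : ℕ) / 2, by omega⟩ with hm
    have hkk : k = ⟨2 * m.val, by simp only [hm, Fin.val_mk]; omega⟩ :=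
      Fin.ext (by simp only [hm, Fin.val_mk]; omega)
    rw [hkk] at hj
    erw [augment_node_even C V m] at hj
    rcases hnode : C.node m with _ | ch | ch <;> rw [hnode] at hj <;>
      simp only [PCNode.children] at hj <;> cases hj

end PCProof
namespace PCProof

open PC

variable {ι : Type} {Val : ι → Type}

theorem augment_nonneg [DecidableEq ι] {C : PC ι Val} (V : Vtree ι)
    (hw : C.NonnegWeights) : (C.augment V).NonnegWeights := by
  constructor
  · intro k ch' hk' p hp
    have hknum : (k : ℕ) < 2 * C.numNodes := k.isLt
    by_cases hk : (k : ℕ) % 2 = 1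
    · set m : Fin C.numNodes := ⟨(k : ℕ) / 2, by omega⟩ with hm
      have hkk : k = ⟨2 * m.val + 1, by simp only [hm, Fin.val_mk]; omega⟩ :=
        Fin.ext (by simp only [hm, Fin.val_mk]; omega)
      erw [hkk, augment_node_odd C V m] at hk'
      rcases hnode : C.node m with _ | ch | ch <;> rw [hnode] at hk'
      · cases hk'
      · injection hk' with h'
        subst h'
        obtain ⟨q, hq, rfl⟩ := List.mem_map.1 hp
        exact hw.1 m ch hnode q hq
      · cases hk'
    · set m : Fin C.numNodes := ⟨(k : ℕ) / 2, by omega⟩ with hm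
      have hkk : k = ⟨2 * m.val, by simp only [hm, Fin.val_mk]; omega⟩ :=
        Fin.ext (by simp only [hm, Fin.val_mk]; omega)
      erw [hkk, augment_node_even C V m] at hk'
      rcases hnode : C.node m with _ | ch | ch <;> rw [hnode] at hk' <;> cases hk'
  · intro k v f hk' a
    have hknum : (k : ℕ) < 2 * C.numNodes := k.isLt
    by_cases hk : (k : ℕ) % 2 = 1
    · set m : Fin C.numNodes := ⟨(k : ℕ) / 2, by omega⟩ with hm
      have hkk : k = ⟨2 * m.val + 1, by simp only [hm, Fin.val_mk]; omega⟩ :=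
        Fin.ext (by simp only [hm, Fin.val_mk]; omega)
      erw [hkk, augment_node_odd C V m] at hk'
      rcases hnode : C.node m with v0 | ch | ch <;> rw [hnode] at hk'
      · cases hk'
        exact hw.2 m _ _ hnode a
      · cases hk'
      · cases hk'
    · set m : Fin C.numNodes := ⟨(k : ℕ) / 2, by omega⟩ with hm
      have hkk : k = ⟨2 * m.val, by simp only [hm, Fin.val_mk]; omega⟩ :=
        Fin.ext (by simp only [hm, Fin.val_mk]; omega)
      erw [hkk, augment_node_even C V m] at hk'
      rcases hnode : C.node m with _ | ch | ch <;> rw [hnode] at hk' <;> cases hk'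
      · exact zero_le_one
      · exact zero_le_one
      · dsimp only
        split <;> norm_num

theorem aug_nodeEval_leaf [DecidableEq ι] {C : PC ι Val} (hWF : C.WF) (V : Vtree ι)
    {i : Fin C.numNodes} {v : ι} {f : Val v → ℝ} (hnode : C.node i = .leaf v f)
    (y : ∀ s, augVal Val s) (h : 2 * i.val + 1 < 2 * C.numNodes) :
    (C.augment V).nodeEval y ⟨2 * i.val + 1, h⟩ = f (y (Sum.inl v)) := by
  exact nodeEval_leaf (augment_WF V hWF) y (by rw [augment_node_odd C V i h, hnode])

theorem aug_nodeEval_sum [DecidableEq ι] {C : PC ι Val} (hWF : C.WF) (V : Vtree ι)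
    {i : Fin C.numNodes} {ch : List (Fin C.numNodes × ℝ)} (hnode : C.node i = .sum ch)
    (y : ∀ s, augVal Val s) (h : 2 * i.val + 1 < 2 * C.numNodes) :
    (C.augment V).nodeEval y ⟨2 * i.val + 1, h⟩ =
      (ch.map fun p => p.2 * (C.augment V).nodeEval y
        ⟨2 * (p.1 : ℕ) + 1, by have := p.1.isLt; show 2 * (p.1 : ℕ) + 1 < 2 * C.numNodes; omega⟩).sum := by
  rw [nodeEval_sum (augment_WF V hWF) y
    (show (C.augment V).node ⟨2 * i.val + 1, h⟩ = .sum (ch.map fun p =>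
      ((⟨2 * (p.1 : ℕ) + 1, by have := p.1.isLt; omega⟩ : Fin (2 * C.numNodes)), p.2))
      from by rw [augment_node_odd C V i h, hnode])]
  rw [List.map_map]
  rfl

theorem aug_nodeEval_prod [DecidableEq ι] {C : PC ι Val} (hWF : C.WF) (V : Vtree ι)
    {i : Fin C.numNodes} {ch : List (Fin C.numNodes)} (hnode : C.node i = .prod ch)
    (y : ∀ s, augVal Val s) (h : 2 * i.val + 1 < 2 * C.numNodes) :
    (C.augment V).nodeEval y ⟨2 * i.val + 1, h⟩ =
      (ch.map fun (j : Fin C.numNodes) => (C.augment V).nodeEval y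
        ⟨2 * (j : ℕ) + 1, by have := j.isLt; show 2 * (j : ℕ) + 1 < 2 * C.numNodes; omega⟩).prod *
      (C.augment V).nodeEval y ⟨2 * i.val, by show 2 * i.val < 2 * C.numNodes; omega⟩ := by
  rw [nodeEval_prod (augment_WF V hWF) y
    (show (C.augment V).node ⟨2 * i.val + 1, h⟩ = .prod ((ch.map fun (j : Fin C.numNodes) =>
      (⟨2 * (j : ℕ) + 1, by have := j.isLt; omega⟩ : Fin (2 * C.numNodes))) ++
      [⟨2 * i.val, by omega⟩])
      from by rw [augment_node_odd C V i h, hnode])]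
  erw [List.map_append, List.prod_append, List.map_map]
  congr 1
  exact mul_one _

theorem aug_nodeEval_even_prod [DecidableEq ι] {C : PC ι Val} (hWF : C.WF) (V : Vtree ι)
    {i : Fin C.numNodes} {ch : List (Fin C.numNodes)} (hnode : C.node i = .prod ch)
    (y : ∀ s, augVal Val s) (h : 2 * i.val < 2 * C.numNodes) :
    (C.augment V).nodeEval y ⟨2 * i.val, h⟩ =
      if y (Sum.inr ((V.findByVars (C.scope i)).getD V)) = C.idxOf i then 1 else 0 := by
  exact nodeEval_leaf (augment_WF V hWF) y (by rw [augment_node_even C V i h, hnode])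

end PCProof
namespace PCProof

open PC

variable {ι : Type} {Val : ι → Type}

theorem exists_ne_zero_of_sum_ne_zero {α : Type} {L : List α} {f : α → ℝ}
    (h : (L.map f).sum ≠ 0) : ∃ a ∈ L, f a ≠ 0 := by
  by_contra hc
  push_neg at hc
  exact h (List.sum_eq_zero fun a ha => by
    obtain ⟨b, hb, rfl⟩ := List.mem_map.1 ha; exact hc b hb)

theorem sum_ne_zero_of_mem {α : Type} {L : List α} {f : α → ℝ}
    (hnn : ∀ a ∈ L, 0 ≤ f a) {a : α} (ha : a ∈ L) (hpos : 0 < f a) :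
    (L.map f).sum ≠ 0 := by
  have h1 : f a ≤ (L.map f).sum :=
    List.single_le_sum (by
      intro b hb; obtain ⟨c, hc, rfl⟩ := List.mem_map.1 hb; exact hnn c hc) _
      (List.mem_map.2 ⟨a, ha, rfl⟩)
  have : 0 < (L.map f).sum := lt_of_lt_of_le hpos h1
  exact this.ne'

theorem augAssign_inr [DecidableEq ι] (V : Vtree ι) (x : ∀ i, Val i)
    (z : ∀ t ∈ V.innerFinset, ℕ) (t : Vtree ι) (ht : t ∈ V.innerFinset) :
    augAssign V x z (Sum.inr t) = z t ht := by
  simp [augAssign, ht]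

theorem l_subtree {ι : Type} (l r : Vtree ι) : l.IsSubtreeOf (Vtree.node l r) :=
  .left (.refl l)

theorem r_subtree {ι : Type} (l r : Vtree ι) : r.IsSubtreeOf (Vtree.node l r) :=
  .right (.refl r)

/-- The evaluation of the augmented circuit below a node with scope `X_t` only depends on
the latent values at inner vtree nodes below `t`. -/
theorem aug_eval_congr [DecidableEq ι] {C : PC ι Val} {V : Vtree ι} (hWF : C.WF)
    (hsm : C.Smooth) (hstr : C.StructuredBy V) (hNd : V.leavesList.Nodup)
    (x : ∀ i, Val i) :
    ∀ (m : ℕ) (i : Fin C.numNodes), i.val < m →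
    ∀ (t : Vtree ι), t.IsSubtreeOf V → C.scope i = t.varsFinset →
    ∀ (z₁ z₂ : ∀ s ∈ V.innerFinset, ℕ),
    (∀ s (hs : s ∈ V.innerFinset), s.IsSubtreeOf t → z₁ s hs = z₂ s hs) →
    ∀ (hi2 : 2 * i.val + 1 < (C.augment V).numNodes),
    (C.augment V).nodeEval (augAssign V x z₁) ⟨2 * i.val + 1, hi2⟩ =
      (C.augment V).nodeEval (augAssign V x z₂) ⟨2 * i.val + 1, hi2⟩ := by
  intro m
  induction m with
  | zero => intro i h; omega
  | succ m ih =>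
    intro i hi t ht hscope z₁ z₂ hagree hi2
    rcases hnode : C.node i with v | ch | ch
    · rw [aug_nodeEval_leaf hWF V hnode _ hi2, aug_nodeEval_leaf hWF V hnode _ hi2]
      rfl
    · rw [aug_nodeEval_sum hWF V hnode _ hi2, aug_nodeEval_sum hWF V hnode _ hi2]
      refine congrArg List.sum (List.map_congr_left fun p hp => ?_)
      have hlt : (p.1 : ℕ) < (i : ℕ) := by
        apply hWF i; rw [hnode]; exact List.mem_map.2 ⟨p, hp, rfl⟩
      have hscp : C.scope p.1 = t.varsFinset := by
        rw [← scope_sum_child hWF hsm hnode hp, hscope]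
      rw [ih p.1 (by omega) t ht hscp z₁ z₂ hagree _]
    · obtain ⟨c₁, c₂, l, r, hch, hlr, hs1, hs2⟩ := hstr i ch hnode
      subst hch
      have hvars : (Vtree.node l r).varsFinset = t.varsFinset := by
        rw [← hscope, scope_prod_pair hWF hnode, hs1, hs2]; rfl
      have heq : Vtree.node l r = t := vars_injective hNd hlr ht hvars
      subst heq
      have hlt1 : (c₁ : ℕ) < (i : ℕ) := by
        apply hWF i; rw [hnode]; exact List.mem_cons_self
      have hlt2 : (c₂ : ℕ) < (i : ℕ) := by
        apply hWF i; rw [hnode]; exact List.mem_cons_of_mem _ (List.mem_cons_self)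
      rw [aug_nodeEval_prod hWF V hnode _ hi2, aug_nodeEval_prod hWF V hnode _ hi2]
      have e1 := ih c₁ (by omega) l (subtree_trans (l_subtree l r) hlr) hs1 z₁ z₂
        (fun s hs hsl => hagree s hs (subtree_trans hsl (l_subtree l r)))
        (by have := c₁.isLt; show 2 * (c₁ : ℕ) + 1 < 2 * C.numNodes; omega)
      have e2 := ih c₂ (by omega) r (subtree_trans (r_subtree l r) hlr) hs2 z₁ z₂
        (fun s hs hsr => hagree s hs (subtree_trans hsr (r_subtree l r)))
        (by have := c₂.isLt; show 2 * (c₂ : ℕ) + 1 < 2 * C.numNodes; omega)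
      have hmem : Vtree.node l r ∈ V.innerFinset := node_mem_innerFinset hlr
      have e3 : (C.augment V).nodeEval (augAssign V x z₁)
            ⟨2 * i.val, by show 2 * i.val < 2 * C.numNodes; omega⟩ =
          (C.augment V).nodeEval (augAssign V x z₂)
            ⟨2 * i.val, by show 2 * i.val < 2 * C.numNodes; omega⟩ := by
        rw [aug_nodeEval_even_prod hWF V hnode _ (by show 2 * i.val < 2 * C.numNodes; omega),
          aug_nodeEval_even_prod hWF V hnode _ (by show 2 * i.val < 2 * C.numNodes; omega)]
        rw [hscope, findByVars_subtree hNd hlr, Option.getD_some]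
        rw [augAssign_inr V x z₁ _ hmem, augAssign_inr V x z₂ _ hmem,
          hagree _ hmem (.refl _)]
      simp only [List.map_cons, List.map_nil, List.prod_cons, List.prod_nil]
      rw [e1, e2, e3]

/-- Nonzero evaluation in the augmented circuit implies nonzero evaluation in the
original circuit. -/
theorem aug_support [DecidableEq ι] {C : PC ι Val} {V : Vtree ι} (hWF : C.WF)
    (hw : C.NonnegWeights) (x : ∀ i, Val i) (z : ∀ t ∈ V.innerFinset, ℕ) :
    ∀ (m : ℕ) (i : Fin C.numNodes), i.val < m →
    ∀ (hi2 : 2 * i.val + 1 < (C.augment V).numNodes),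
    (C.augment V).nodeEval (augAssign V x z) ⟨2 * i.val + 1, hi2⟩ ≠ 0 →
    C.nodeEval x i ≠ 0 := by
  intro m
  induction m with
  | zero => intro i h; omega
  | succ m ih =>
    intro i hi hi2 haug
    rcases hnode : C.node i with v | ch | ch
    · rw [aug_nodeEval_leaf hWF V hnode _ hi2] at haug
      rw [nodeEval_leaf hWF x hnode]
      exact haug
    · rw [aug_nodeEval_sum hWF V hnode _ hi2] at haug
      obtain ⟨p, hp, hne⟩ := exists_ne_zero_of_sum_ne_zero haug
      have hlt : (p.1 : ℕ) < (i : ℕ) := by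
        apply hWF i; rw [hnode]; exact List.mem_map.2 ⟨p, hp, rfl⟩
      have hw2 : p.2 ≠ 0 := left_ne_zero_of_mul hne
      have hA := right_ne_zero_of_mul hne
      have hCp : C.nodeEval x p.1 ≠ 0 := ih p.1 (by omega) _ hA
      rw [nodeEval_sum hWF x hnode]
      refine sum_ne_zero_of_mem (fun q hq =>
        mul_nonneg (hw.1 i ch hnode q hq) (nodeEval_nonneg' hWF hw x q.1)) hp ?_
      exact lt_of_le_of_ne
        (mul_nonneg (hw.1 i ch hnode p hp) (nodeEval_nonneg' hWF hw x p.1))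
        (Ne.symm (mul_ne_zero hw2 hCp))
    · rw [aug_nodeEval_prod hWF V hnode _ hi2] at haug
      have h1 := left_ne_zero_of_mul haug
      rw [nodeEval_prod hWF x hnode]
      apply List.prod_ne_zero
      intro h0
      obtain ⟨j, hj, hj0⟩ := List.mem_map.1 h0
      have hlt : (j : ℕ) < (i : ℕ) := by apply hWF i; rw [hnode]; exact hj
      have hAj : (C.augment V).nodeEval (augAssign V x z)
          ⟨2 * (j : ℕ) + 1,
            by have := j.isLt; show 2 * (j : ℕ) + 1 < 2 * C.numNodes; omega⟩ ≠ 0 := by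
        intro hz
        exact h1 (List.prod_eq_zero (List.mem_map.2 ⟨j, hj, hz⟩))
      exact (ih j (by omega) _ hAj) hj0

end PCProof
namespace PCProof

open PC

variable {ι : Type} {Val : ι → Type}

theorem leaf_scope_no_inner [DecidableEq ι] {V t : Vtree ι} (hNd : V.leavesList.Nodup)
    (ht : t.IsSubtreeOf V) {v : ι} (hv : t.varsFinset = {v}) {s : Vtree ι}
    (hs : s ∈ V.innerFinset) (hst : s.IsSubtreeOf t) : False := by
  cases t with
  | node a b => exact inner_not_leaf_vars hNd ht v hv
  | leaf w =>
    cases hst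
    have := (mem_innerFinset_iff.1 hs).2
    simp [Vtree.isNodeB] at this

/-- Uniqueness: the latent values below `t` are determined by a nonzero evaluation. -/
theorem aug_unique [DecidableEq ι] {C : PC ι Val} {V : Vtree ι} (hWF : C.WF)
    (hw : C.NonnegWeights) (hsm : C.Smooth) (hstr : C.StructuredBy V)
    (hdet : C.Deterministic) (hNd : V.leavesList.Nodup) (x : ∀ i, Val i) :
    ∀ (m : ℕ) (i : Fin C.numNodes), i.val < m →
    ∀ (t : Vtree ι), t.IsSubtreeOf V → C.scope i = t.varsFinset →
    ∀ (z₁ z₂ : ∀ s ∈ V.innerFinset, ℕ)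
      (hi2 : 2 * i.val + 1 < (C.augment V).numNodes),
    (C.augment V).nodeEval (augAssign V x z₁) ⟨2 * i.val + 1, hi2⟩ ≠ 0 →
    (C.augment V).nodeEval (augAssign V x z₂) ⟨2 * i.val + 1, hi2⟩ ≠ 0 →
    ∀ s (hs : s ∈ V.innerFinset), s.IsSubtreeOf t → z₁ s hs = z₂ s hs := by
  intro m
  induction m with
  | zero => intro i h; omega
  | succ m ih =>
    intro i hi t ht hscope z₁ z₂ hi2 ha1 ha2 s hs hst
    rcases hnode : C.node i with v | ch | ch
    · exact (leaf_scope_no_inner hNd ht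
        (by rw [← hscope, scope_leaf hWF hnode]) hs hst).elim
    · rw [aug_nodeEval_sum hWF V hnode _ hi2] at ha1 ha2
      obtain ⟨p, hp, hne1⟩ := exists_ne_zero_of_sum_ne_zero ha1
      obtain ⟨q, hq, hne2⟩ := exists_ne_zero_of_sum_ne_zero ha2
      have hlt1 : (p.1 : ℕ) < (i : ℕ) := by
        apply hWF i; rw [hnode]; exact List.mem_map.2 ⟨p, hp, rfl⟩
      have hlt2 : (q.1 : ℕ) < (i : ℕ) := by
        apply hWF i; rw [hnode]; exact List.mem_map.2 ⟨q, hq, rfl⟩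
      have hA1 := right_ne_zero_of_mul hne1
      have hA2 := right_ne_zero_of_mul hne2
      have hC1 : C.nodeEval x p.1 ≠ 0 :=
        aug_support hWF hw x z₁ (p.1.val + 1) p.1 (by omega) _ hA1
      have hC2 : C.nodeEval x q.1 ≠ 0 :=
        aug_support hWF hw x z₂ (q.1.val + 1) q.1 (by omega) _ hA2
      have hpq : p.1 = q.1 := hdet x i ch hnode p hp q hq hC1 hC2
      have hscp : C.scope p.1 = t.varsFinset := by
        rw [← scope_sum_child hWF hsm hnode hp, hscope]
      have hb1 : 2 * (p.1 : ℕ) + 1 < (C.augment V).numNodes := by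
        have := p.1.isLt; show 2 * (p.1 : ℕ) + 1 < 2 * C.numNodes; omega
      have hb2 : 2 * (q.1 : ℕ) + 1 < (C.augment V).numNodes := by
        have := q.1.isLt; show 2 * (q.1 : ℕ) + 1 < 2 * C.numNodes; omega
      have hfin : (⟨2 * (q.1 : ℕ) + 1, hb2⟩ : Fin ((C.augment V).numNodes)) =
          ⟨2 * (p.1 : ℕ) + 1, hb1⟩ := Fin.ext (by simp only [Fin.val_mk]; rw [hpq])
      rw [hfin] at hA2
      exact ih p.1 (by omega) t ht hscp z₁ z₂ hb1 hA1 hA2 s hs hst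
    · obtain ⟨c₁, c₂, l, r, hch, hlr, hs1, hs2⟩ := hstr i ch hnode
      subst hch
      have hvars : (Vtree.node l r).varsFinset = t.varsFinset := by
        rw [← hscope, scope_prod_pair hWF hnode, hs1, hs2]; rfl
      have heq : Vtree.node l r = t := vars_injective hNd hlr ht hvars
      subst heq
      have hlt1 : (c₁ : ℕ) < (i : ℕ) := by
        apply hWF i; rw [hnode]; exact List.mem_cons_self
      have hlt2 : (c₂ : ℕ) < (i : ℕ) := by
        apply hWF i; rw [hnode]; exact List.mem_cons_of_mem _ (List.mem_cons_self)
      rw [aug_nodeEval_prod hWF V hnode _ hi2] at ha1 ha2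
      simp only [List.map_cons, List.map_nil, List.prod_cons, List.prod_nil] at ha1 ha2
      have he1 := right_ne_zero_of_mul ha1
      have he2 := right_ne_zero_of_mul ha2
      have hc1a := left_ne_zero_of_mul (left_ne_zero_of_mul ha1)
      have hc1b := left_ne_zero_of_mul (right_ne_zero_of_mul (left_ne_zero_of_mul ha1))
      have hc2a := left_ne_zero_of_mul (left_ne_zero_of_mul ha2)
      have hc2b := left_ne_zero_of_mul (right_ne_zero_of_mul (left_ne_zero_of_mul ha2))
      have hmem : Vtree.node l r ∈ V.innerFinset := node_mem_innerFinset hlr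
      rcases subtree_node_cases hst with rfl | hsl | hsr
      · -- the indicator forces the value at the root of `t`
        rw [aug_nodeEval_even_prod hWF V hnode _
            (by show 2 * i.val < 2 * C.numNodes; omega),
          hscope, findByVars_subtree hNd hlr, Option.getD_some,
          augAssign_inr V x z₁ _ hmem] at he1
        rw [aug_nodeEval_even_prod hWF V hnode _
            (by show 2 * i.val < 2 * C.numNodes; omega),
          hscope, findByVars_subtree hNd hlr, Option.getD_some,
          augAssign_inr V x z₂ _ hmem] at he2
        have h1 : z₁ (Vtree.node l r) hmem = C.idxOf i := by
          by_contra hcon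
          rw [if_neg hcon] at he1
          exact he1 rfl
        have h2 : z₂ (Vtree.node l r) hmem = C.idxOf i := by
          by_contra hcon
          rw [if_neg hcon] at he2
          exact he2 rfl
        exact h1.trans h2.symm
      · exact ih c₁ (by omega) l (subtree_trans (l_subtree l r) hlr) hs1 z₁ z₂
          (by have := c₁.isLt; show 2 * (c₁ : ℕ) + 1 < 2 * C.numNodes; omega)
          hc1a hc2a s hs hsl
      · exact ih c₂ (by omega) r (subtree_trans (r_subtree l r) hlr) hs2 z₁ z₂
          (by have := c₂.isLt; show 2 * (c₂ : ℕ) + 1 < 2 * C.numNodes; omega)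
          hc1b hc2b s hs hsr

/-- Existence: a suitable latent assignment below `t` exists. -/
theorem aug_exists [DecidableEq ι] {C : PC ι Val} {V : Vtree ι} (hWF : C.WF)
    (hw : C.NonnegWeights) (hsm : C.Smooth) (hstr : C.StructuredBy V)
    (hNd : V.leavesList.Nodup) (x : ∀ i, Val i) :
    ∀ (m : ℕ) (i : Fin C.numNodes), i.val < m →
    ∀ (t : Vtree ι), t.IsSubtreeOf V → C.scope i = t.varsFinset →
    C.nodeEval x i ≠ 0 →
    ∀ (hi2 : 2 * i.val + 1 < (C.augment V).numNodes),
    ∃ z : ∀ s ∈ V.innerFinset, ℕ,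
      (∀ s (hs : s ∈ V.innerFinset), s.IsSubtreeOf t →
        z s hs < C.prodCount s.varsFinset) ∧
      (C.augment V).nodeEval (augAssign V x z) ⟨2 * i.val + 1, hi2⟩ ≠ 0 := by
  intro m
  induction m with
  | zero => intro i h; omega
  | succ m ih =>
    intro i hi t ht hscope hne hi2
    rcases hnode : C.node i with v | ch | ch
    · refine ⟨fun _ _ => 0, fun s hs hst => (leaf_scope_no_inner hNd ht
        (by rw [← hscope, scope_leaf hWF hnode]) hs hst).elim, ?_⟩
      rw [aug_nodeEval_leaf hWF V hnode _ hi2]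
      rw [nodeEval_leaf hWF x hnode] at hne
      exact hne
    · rw [nodeEval_sum hWF x hnode] at hne
      obtain ⟨p, hp, hpne⟩ := exists_ne_zero_of_sum_ne_zero hne
      have hlt : (p.1 : ℕ) < (i : ℕ) := by
        apply hWF i; rw [hnode]; exact List.mem_map.2 ⟨p, hp, rfl⟩
      have hscp : C.scope p.1 = t.varsFinset := by
        rw [← scope_sum_child hWF hsm hnode hp, hscope]
      obtain ⟨z, hzr, hzne⟩ := ih p.1 (by omega) t ht hscp
        (right_ne_zero_of_mul hpne)
        (by have := p.1.isLt; show 2 * (p.1 : ℕ) + 1 < 2 * C.numNodes; omega)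
      refine ⟨z, hzr, ?_⟩
      rw [aug_nodeEval_sum hWF V hnode _ hi2]
      refine sum_ne_zero_of_mem (fun q hq => mul_nonneg (hw.1 i ch hnode q hq)
        (nodeEval_nonneg' (augment_WF V hWF) (augment_nonneg V hw) _ _)) hp ?_
      have hp2 : (0 : ℝ) < p.2 :=
        lt_of_le_of_ne (hw.1 i ch hnode p hp) (Ne.symm (left_ne_zero_of_mul hpne))
      have hz2 : (0 : ℝ) < (C.augment V).nodeEval (augAssign V x z)
          ⟨2 * (p.1 : ℕ) + 1,
            by have := p.1.isLt; show 2 * (p.1 : ℕ) + 1 < 2 * C.numNodes; omega⟩ :=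
        lt_of_le_of_ne (nodeEval_nonneg' (augment_WF V hWF) (augment_nonneg V hw) _ _)
          (Ne.symm hzne)
      exact mul_pos hp2 hz2
    · obtain ⟨c₁, c₂, l, r, hch, hlr, hs1, hs2⟩ := hstr i ch hnode
      subst hch
      have hvars : (Vtree.node l r).varsFinset = t.varsFinset := by
        rw [← hscope, scope_prod_pair hWF hnode, hs1, hs2]; rfl
      have heq : Vtree.node l r = t := vars_injective hNd hlr ht hvars
      subst heq
      have hNdt : (Vtree.node l r).leavesList.Nodup := subtree_nodup hlr hNd
      have hlt1 : (c₁ : ℕ) < (i : ℕ) := by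
        apply hWF i; rw [hnode]; exact List.mem_cons_self
      have hlt2 : (c₂ : ℕ) < (i : ℕ) := by
        apply hWF i; rw [hnode]; exact List.mem_cons_of_mem _ (List.mem_cons_self)
      rw [nodeEval_prod hWF x hnode] at hne
      simp only [List.map_cons, List.map_nil, List.prod_cons, List.prod_nil] at hne
      have hne1 : C.nodeEval x c₁ ≠ 0 := left_ne_zero_of_mul hne
      have hne2 : C.nodeEval x c₂ ≠ 0 :=
        left_ne_zero_of_mul (right_ne_zero_of_mul hne)
      obtain ⟨zl, hzlr, hzlne⟩ := ih c₁ (by omega) l (subtree_trans (l_subtree l r) hlr)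
        hs1 hne1 (by have := c₁.isLt; show 2 * (c₁ : ℕ) + 1 < 2 * C.numNodes; omega)
      obtain ⟨zr, hzrr, hzrne⟩ := ih c₂ (by omega) r (subtree_trans (r_subtree l r) hlr)
        hs2 hne2 (by have := c₂.isLt; show 2 * (c₂ : ℕ) + 1 < 2 * C.numNodes; omega)
      set zc : ∀ s ∈ V.innerFinset, ℕ := (fun s hs =>
        if s ∈ l.subtreesList then zl s hs
        else if s ∈ r.subtreesList then zr s hs else C.idxOf i) with hzcdef
      have hzc : ∀ s hs, zc s hs =
          if s ∈ l.subtreesList then zl s hs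
          else if s ∈ r.subtreesList then zr s hs else C.idxOf i := fun _ _ => rfl
      refine ⟨zc, ?_, ?_⟩
      · intro s hs hst
        rcases subtree_node_cases hst with rfl | hsl | hsr
        · rw [hzc, if_neg (fun hm => subtree_vars_ssubset hNdt
              (mem_subtreesList_iff.1 hm) subset_rfl),
            if_neg (fun hm => subtree_vars_ssubset' hNdt
              (mem_subtreesList_iff.1 hm) subset_rfl)]
          have hpb : (C.node i).isProdB = true := by rw [hnode]; rfl
          have hic := idxOf_lt_prodCount hpb
          rwa [hscope] at hic
        · rw [hzc, if_pos (mem_subtreesList_iff.2 hsl)]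
          exact hzlr s hs hsl
        · rw [hzc, if_neg (fun hm => not_subtree_both hNdt
            (mem_subtreesList_iff.1 hm) hsr),
            if_pos (mem_subtreesList_iff.2 hsr)]
          exact hzrr s hs hsr
      · rw [aug_nodeEval_prod hWF V hnode _ hi2]
        simp only [List.map_cons, List.map_nil, List.prod_cons, List.prod_nil]
        have hmem : Vtree.node l r ∈ V.innerFinset := node_mem_innerFinset hlr
        have e1 := aug_eval_congr hWF hsm hstr hNd x (c₁.val + 1) c₁ (by omega) l
          (subtree_trans (l_subtree l r) hlr) hs1 zc zl
          (fun s hs hsl => by rw [hzc, if_pos (mem_subtreesList_iff.2 hsl)])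
          (by have := c₁.isLt; show 2 * (c₁ : ℕ) + 1 < 2 * C.numNodes; omega)
        have e2 := aug_eval_congr hWF hsm hstr hNd x (c₂.val + 1) c₂ (by omega) r
          (subtree_trans (r_subtree l r) hlr) hs2 zc zr
          (fun s hs hsr => by
            rw [hzc, if_neg (fun hm => not_subtree_both hNdt
              (mem_subtreesList_iff.1 hm) hsr),
              if_pos (mem_subtreesList_iff.2 hsr)])
          (by have := c₂.isLt; show 2 * (c₂ : ℕ) + 1 < 2 * C.numNodes; omega)
        have hzct : zc (Vtree.node l r) hmem = C.idxOf i := by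
          rw [hzc, if_neg (fun hm => subtree_vars_ssubset hNdt
            (mem_subtreesList_iff.1 hm) subset_rfl),
            if_neg (fun hm => subtree_vars_ssubset' hNdt
            (mem_subtreesList_iff.1 hm) subset_rfl)]
        have e3 : (C.augment V).nodeEval (augAssign V x zc)
            ⟨2 * i.val, by show 2 * i.val < 2 * C.numNodes; omega⟩ = 1 := by
          rw [aug_nodeEval_even_prod hWF V hnode _
            (by show 2 * i.val < 2 * C.numNodes; omega),
            hscope, findByVars_subtree hNd hlr, Option.getD_some,
            augAssign_inr V x zc _ hmem, hzct, if_pos rfl]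
        rw [e1, e2, e3]
        exact mul_ne_zero (mul_ne_zero hzlne (mul_ne_zero hzrne one_ne_zero)) one_ne_zero

end PCProof
/-- Let `A` be a smooth, structured-decomposable, deterministic
probabilistic circuit over variables `X` respecting a vtree `V`, with augmented PC `A_aug`
over `X ∪ Z`.  Then for every assignment `x` of `X` with `p_A(x) > 0`, there is exactly one
joint assignment `z` of the latent variables `Z` such that `p_{A_aug}(x, z) > 0`. -/
theorem statement5 {n : ℕ} (Val : Fin n → Type) [∀ i, Fintype (Val i)]
    (C : PC (Fin n) Val) (V : Vtree (Fin n)) (hV : V.ValidOver Set.univ)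
    (hpc : C.IsPCOver) (hsm : C.Smooth) (hdec : C.Decomposable) (hstr : C.StructuredBy V)
    (hdet : C.Deterministic)
    (x : ∀ i, Val i) (hx : 0 < C.eval x) :
    ∃! z : ∀ t ∈ V.innerFinset, ℕ,
      z ∈ V.innerFinset.pi (fun t => Finset.range (C.prodCount t.varsFinset)) ∧
        0 < (C.augment V).eval (augAssign V x z) := by
  classical
  obtain ⟨hWF, hw, hns, hnl, halt, hroot⟩ := hpc
  have hNd : V.leavesList.Nodup := hV.1
  have hvarsV : V.varsFinset = Finset.univ := by
    rw [PCProof.vars_eq_toFinset]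
    apply Finset.eq_univ_iff_forall.2
    intro a
    rw [List.mem_toFinset]
    exact (hV.2 a).2 trivial
  have hN : 0 < C.numNodes := by
    by_contra h
    rw [PC.eval, dif_neg h] at hx
    exact lt_irrefl 0 hx
  set root : Fin C.numNodes := ⟨C.numNodes - 1, by omega⟩ with hrootdef
  have hrootval : root.val = C.numNodes - 1 := rfl
  have hxr : 0 < C.nodeEval x root := by
    rw [PC.eval, dif_pos hN] at hx
    exact hx
  have hscope : C.scope root = V.varsFinset := by
    have h1 : C.rootScope = C.scope root := by rw [PC.rootScope, dif_pos hN]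
    rw [← h1, hroot, hvarsV]
  have hAnum : 0 < (C.augment V).numNodes := by
    show 0 < 2 * C.numNodes
    omega
  have hb : 2 * root.val + 1 < (C.augment V).numNodes := by
    show 2 * root.val + 1 < 2 * C.numNodes
    omega
  have hevalAug : ∀ z : ∀ t ∈ V.innerFinset, ℕ,
      (C.augment V).eval (augAssign V x z) =
        (C.augment V).nodeEval (augAssign V x z) ⟨2 * root.val + 1, hb⟩ := by
    intro z
    rw [PC.eval, dif_pos hAnum]
    congr 1
    refine Fin.ext ?_
    show (C.augment V).numNodes - 1 = 2 * root.val + 1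
    show 2 * C.numNodes - 1 = 2 * root.val + 1
    omega
  obtain ⟨z₀, hz₀r, hz₀ne⟩ := PCProof.aug_exists hWF hw hsm hstr hNd x C.numNodes root
    (by omega) V (.refl V) hscope hxr.ne' hb
  have hz₀pos : 0 < (C.augment V).eval (augAssign V x z₀) := by
    rw [hevalAug z₀]
    exact lt_of_le_of_ne
      (PCProof.nodeEval_nonneg' (PCProof.augment_WF V hWF) (PCProof.augment_nonneg V hw)
        (augAssign V x z₀) _) (Ne.symm hz₀ne)
  refine ⟨z₀, ⟨?_, hz₀pos⟩, ?_⟩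
  · rw [Finset.mem_pi]
    intro t ht
    rw [Finset.mem_range]
    exact hz₀r t ht (PCProof.mem_innerFinset_iff.1 ht).1
  · rintro z' ⟨hz'pi, hz'pos⟩
    have hz'ne : (C.augment V).nodeEval (augAssign V x z') ⟨2 * root.val + 1, hb⟩ ≠ 0 := by
      rw [← hevalAug z']
      exact hz'pos.ne'
    funext t ht
    exact PCProof.aug_unique hWF hw hsm hstr hdet hNd x C.numNodes root (by omega)
      V (.refl V) hscope z' z₀ hb hz'ne hz₀ne t ht (PCProof.mem_innerFinset_iff.1 ht).1
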